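/- Let Γ ⊆ ℒ be consistent and compositional, and let V^Γ denote V_π for any maximal model π of Γ (this is well-defined since all maximal models of Γ involve the same set of variables). Then for any outcomes α, β: (α ≡_{π'} β holds for every model π' of Γ) if and only if α and β agree on all variables of V^Γ. -/

import Mathlib

namespace LexPref

/-- A pair consisting of a variable and a total order (as a binary relation) on its domain. -/
structure LexPair (ι : Type*) (D : ι → Type*) where
  var : ι
  ord : D var → D var → Prop
  isLin : IsLinearOrder (D var) ord

/-- An outcome assigns a value to every variable. -/
abbrev Outcome (ι : Type*) (D : ι → Type*) := ∀ i, D i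

/-- A lexicographic model: a list of pairs (variable, total order) with pairwise
distinct variables. -/
abbrev LexModel (ι : Type*) (D : ι → Type*) :=
  { l : List (LexPair ι D) // (l.map LexPair.var).Nodup }

variable {ι : Type*} {D : ι → Type*}

/-- The list of variables occurring in a lex model. -/
def vars (π : LexModel ι D) : List ι := π.1.map LexPair.var

/-- The empty lex model. -/
def emptyModel : LexModel ι D := ⟨[], List.nodup_nil⟩

/-- Composition of lex models: `π` followed by the pairs of `π'` whose variable does
not occur in `π`. -/
def comp [DecidableEq ι] (π π' : LexModel ι D) : LexModel ι D :=
  ⟨π.1 ++ π'.1.filter (fun p => decide (p.var ∉ vars π)), by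
    have h1 : (π'.1.filter (fun p => decide (p.var ∉ vars π))).Sublist π'.1 :=
      List.filter_sublist
    rw [List.map_append, List.nodup_append]
    refine ⟨π.2, (h1.map LexPair.var).nodup π'.2, ?_⟩
    intro x hx y hy
    obtain ⟨p, hp, rfl⟩ := List.mem_map.mp hy
    have hd := List.of_mem_filter hp
    simp only [decide_eq_true_eq] at hd
    rintro rfl
    exact hd hx⟩

/-- `π'` extends `π`: `π' ≠ π` and the sequence `π'` begins with `π`. -/
def Extends (π' π : LexModel ι D) : Prop := π' ≠ π ∧ π.1 <+: π'.1

/-- `π' ⊒ π`: `π'` extends or equals `π`. -/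
def ExtendsEq (π' π : LexModel ι D) : Prop := π.1 <+: π'.1

/-- Lexicographic weak preference along a list of pairs. -/
def prefList : List (LexPair ι D) → Outcome ι D → Outcome ι D → Prop
  | [], _, _ => True
  | p :: rest, α, β =>
      (α p.var ≠ β p.var ∧ p.ord (α p.var) (β p.var)) ∨
      (α p.var = β p.var ∧ prefList rest α β)

/-- Lexicographic strict preference along a list of pairs. -/
def sprefList : List (LexPair ι D) → Outcome ι D → Outcome ι D → Prop
  | [], _, _ => False
  | p :: rest, α, β =>
      (α p.var ≠ β p.var ∧ p.ord (α p.var) (β p.var)) ∨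
      (α p.var = β p.var ∧ sprefList rest α β)

/-- `α ≽_π β`. -/
def pref (π : LexModel ι D) (α β : Outcome ι D) : Prop := prefList π.1 α β

/-- `α ≻_π β`. -/
def spref (π : LexModel ι D) (α β : Outcome ι D) : Prop := sprefList π.1 α β

/-- `α ≡_π β`: the outcomes agree on all variables of `π`. -/
def eqOn (π : LexModel ι D) (α β : Outcome ι D) : Prop := ∀ X ∈ vars π, α X = β X

section Language

variable {L : Type*} (sat : LexModel ι D → L → Prop)

/-- `π ⊨ Γ`. -/
def satSet (π : LexModel ι D) (Γ : Set L) : Prop := ∀ φ ∈ Γ, sat π φ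

/-- `Γ` is consistent: some lex model satisfies it. -/
def Consistent (Γ : Set L) : Prop := ∃ π, satSet sat π Γ

/-- `π ⊨* φ`: some `π' ⊒ π` satisfies `φ`. -/
def satStar (π : LexModel ι D) (φ : L) : Prop := ∃ π', ExtendsEq π' π ∧ sat π' φ

/-- `π ⊨* Γ`. -/
def satStarSet (π : LexModel ι D) (Γ : Set L) : Prop := ∀ φ ∈ Γ, satStar sat π φ

/-- `φ` is compositional. -/
def CompositionalStmt [DecidableEq ι] (φ : L) : Prop :=
  ∀ π π', sat π φ → sat π' φ → sat (comp π π') φ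

/-- `Γ` is compositional. -/
def Compositional [DecidableEq ι] (Γ : Set L) : Prop :=
  ∀ φ ∈ Γ, CompositionalStmt sat φ

/-- `φ` is strongly compositional. -/
def StronglyCompositionalStmt [DecidableEq ι] (φ : L) : Prop :=
  ∀ π π', satStar sat π φ → sat π' φ → sat (comp π π') φ

/-- `Γ` is strongly compositional. -/
def StronglyCompositional [DecidableEq ι] (Γ : Set L) : Prop :=
  ∀ φ ∈ Γ, StronglyCompositionalStmt sat φ

/-- `π` is a maximal model of `Γ`. -/
def MaximalModel (π : LexModel ι D) (Γ : Set L) : Prop :=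
  satSet sat π Γ ∧ ∀ π', Extends π' π → ¬ satSet sat π' Γ

/-- `π` is a maximal `⊨*`-model of `Γ`. -/
def MaximalStarModel (π : LexModel ι D) (Γ : Set L) : Prop :=
  satStarSet sat π Γ ∧ ∀ π', Extends π' π → ¬ satStarSet sat π' Γ

end Language

/-- `O_σ(𝒜)`: the optimal elements of `A` with respect to `σ`. -/
def opt (σ : LexModel ι D) (A : Set (Outcome ι D)) : Set (Outcome ι D) :=
  {α ∈ A | ∀ β ∈ A, pref σ α β}

/-- Iterated optimisation `𝒜_{π₁,…,π_k}`. -/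
def iterOpt : List (LexModel ι D) → Set (Outcome ι D) → Set (Outcome ι D)
  | [], A => A
  | σ :: rest, A => iterOpt rest (opt σ A)

end LexPref

/-!
Composing a model `π'` of `Γ` after a maximal model `π` gives a model of `Γ` (compositionality)
that begins with `π`; by maximality it adds nothing, so every variable of `π'` already occurs in
`π`. Hence agreeing on `V_π` is the same as being equivalent in every model of `Γ`.
-/

namespace LexPref

section

variable {ι : Type*} {D : ι → Type*} [DecidableEq ι]

theorem extends_comp_of_mem_vars {π π' : LexModel ι D} {X : ι}
    (hX' : X ∈ vars π') (hX : X ∉ vars π) : Extends (comp π π') π := by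
  refine ⟨fun heq => ?_, List.prefix_append _ _⟩
  obtain ⟨p, hp, rfl⟩ := List.mem_map.mp hX'
  have hp_new : p ∈ π'.1.filter (fun p => decide (p.var ∉ vars π)) :=
    List.mem_filter.mpr ⟨hp, by simpa using hX⟩
  have hlen := congrArg (fun σ : LexModel ι D => σ.1.length) heq
  simp only [comp, List.length_append] at hlen
  have := List.length_pos_of_mem hp_new
  omega

variable {L : Type*} {sat : LexModel ι D → L → Prop} {Γ : Set L}

theorem Compositional.satSet_comp (hcomp : Compositional sat Γ) {π π' : LexModel ι D}
    (hπ : satSet sat π Γ) (hπ' : satSet sat π' Γ) : satSet sat (comp π π') Γ :=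
  fun φ hφ => hcomp φ hφ π π' (hπ φ hφ) (hπ' φ hφ)

theorem MaximalModel.mem_vars_of_satSet (hcomp : Compositional sat Γ) {π π' : LexModel ι D}
    (hmax : MaximalModel sat π Γ) (hπ' : satSet sat π' Γ) {X : ι} (hX : X ∈ vars π') :
    X ∈ vars π := by
  by_contra hXπ
  exact hmax.2 _ (extends_comp_of_mem_vars hX hXπ) (hcomp.satSet_comp hmax.1 hπ')

end

theorem equiv_iff_agree_on_VGamma_general {ι : Type*} {D : ι → Type*} [DecidableEq ι]
    {L : Type*}
    (sat : LexModel ι D → L → Prop) (Γ : Set L)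
    (hcomp : Compositional sat Γ)
    (π : LexModel ι D) (hmax : MaximalModel sat π Γ)
    (α β : Outcome ι D) :
    (∀ π', satSet sat π' Γ → eqOn π' α β) ↔ (∀ X ∈ vars π, α X = β X) :=
  ⟨fun h => h π hmax.1,
    fun hagree _ hπ' X hX => hagree X (hmax.mem_vars_of_satSet hcomp hπ' hX)⟩

/-- for consistent compositional `Γ` with maximal model `π`
(so that `V^Γ = V_π`), two outcomes are equivalent in every model of `Γ`
iff they agree on all variables of `V^Γ`. -/
theorem equiv_iff_agree_on_VGamma {ι : Type*} {D : ι → Type*} [DecidableEq ι]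
    [Fintype ι] [∀ i, Fintype (D i)] {L : Type*}
    (sat : LexModel ι D → L → Prop) (Γ : Set L)
    (hcons : Consistent sat Γ) (hcomp : Compositional sat Γ)
    (π : LexModel ι D) (hmax : MaximalModel sat π Γ)
    (α β : Outcome ι D) :
    (∀ π', satSet sat π' Γ → eqOn π' α β) ↔ (∀ X ∈ vars π, α X = β X) :=
  equiv_iff_agree_on_VGamma_general sat Γ hcomp π hmax α β

end LexPref
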